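/- arXiv:1412.1736 — 7 statements merged into one kernel-verified Lean document; each statement's English description precedes it below -/
import Mathlib

section
/- The amnesiac map α is a nearring homomorphism on PP(G): for all zero-preserving prefix-preserving maps n, m on G^ℕ, α(n) is again zero-preserving and prefix-preserving, α(n + m) = α(n) + α(m) (pointwise addition), and α(n ∘ m) = α(n) ∘ α(m). -/
/-- A map on sequences over `G` is prefix preserving. -/
def PrefixPreserving {G : Type*} [AddGroup G] (n : (ℕ → G) → (ℕ → G)) : Prop :=
  ∀ k : ℕ, ∀ x y : ℕ → G, (∀ i < k, x i = y i) → ∀ i < k, n x i = n y i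

/-- A map on sequences over `G` is zero preserving. -/
def ZeroPreserving {G : Type*} [AddGroup G] (n : (ℕ → G) → (ℕ → G)) : Prop :=
  n 0 = 0

/-- `delta i g` is the sequence with `g` in position `i` and `0` elsewhere. -/
def delta {G : Type*} [AddGroup G] (i : ℕ) (g : G) : ℕ → G :=
  fun j => if j = i then g else 0

/-- The amnesiac map: `((α n) x)_i = (n (δ_i (x_i)))_i`. -/
def amnesiac {G : Type*} [AddGroup G] (n : (ℕ → G) → (ℕ → G)) :
    (ℕ → G) → (ℕ → G) :=
  fun x i => n (delta i (x i)) i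

lemma delta_zero {G : Type*} [AddGroup G] (i : ℕ) : delta i (0 : G) = 0 := by
  funext j; simp [delta]

/-- The amnesiac map `α` is a nearring homomorphism on `PP(G)`: it maps zero-preserving
prefix-preserving maps to zero-preserving prefix-preserving maps, respects pointwise
addition and respects composition. -/
theorem amnesiac_nearring_hom {G : Type*} [AddGroup G]
    (n m : (ℕ → G) → (ℕ → G))
    (hn0 : ZeroPreserving n) (hnp : PrefixPreserving n)
    (hm0 : ZeroPreserving m) (hmp : PrefixPreserving m) :
    (ZeroPreserving (amnesiac n) ∧ PrefixPreserving (amnesiac n)) ∧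
    amnesiac (fun x => n x + m x) = (fun x => amnesiac n x + amnesiac m x) ∧
    amnesiac (n ∘ m) = amnesiac n ∘ amnesiac m := by
  refine ⟨⟨?_, ?_⟩, ?_, ?_⟩
  · funext i
    simp only [amnesiac, Pi.zero_apply, delta_zero]
    exact congrFun hn0 i
  · intro k x y hxy i hi
    simp only [amnesiac, hxy i hi]
  · funext x i
    simp [amnesiac]
  · funext x i
    simp only [amnesiac, Function.comp_apply]
    -- n (m (delta i (x i))) i = n (delta i (m (delta i (x i)) i)) i
    apply hnp (i+1) _ _ _ i (Nat.lt_succ_self i)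
    intro j hj
    rcases Nat.lt_succ_iff_lt_or_eq.mp hj with hj | rfl
    · have h1 : m (delta i (x i)) j = m 0 j := by
        apply hmp j.succ _ _ _ j (Nat.lt_succ_self j)
        intro l hl
        have : l ≠ i := by omega
        simp [delta, this]
      rw [h1, hm0]
      simp [delta, Nat.ne_of_lt hj]
    · simp [delta]
end

section
/- For a prefix-preserving map n : G^ℕ → G^ℕ the following are equivalent: (1) α(n) = 0 (the zero map); (2) for all i ∈ ℕ and g ∈ G, (n(δ_i(g)))_i = 0; (3) for every x ∈ G^ℕ and k ∈ ℕ, if x_j = 0 for all j < k then (n x)_j = 0 for all j ≤ k (i.e., an input with k leading zeros produces an output with at least k+1 leading zeros). -/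
/-- Characterization of the kernel of the amnesiac map for prefix-preserving maps:
`α(n) = 0` iff `n` kills every `δ_i(g)` in position `i`, iff an input with `k`
leading zeros produces an output with at least `k + 1` leading zeros. -/
theorem mem_ker_amnesiac_iff {G : Type*} [AddGroup G]
    (n : (ℕ → G) → (ℕ → G)) (hn : PrefixPreserving n) :
    (amnesiac n = 0 ↔ ∀ (i : ℕ) (g : G), n (delta i g) i = 0) ∧
    (amnesiac n = 0 ↔
      ∀ (x : ℕ → G) (k : ℕ), (∀ j < k, x j = 0) → ∀ j ≤ k, n x j = 0) := by
  have h12 : amnesiac n = 0 ↔ ∀ (i : ℕ) (g : G), n (delta i g) i = 0 := by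
    constructor
    · intro h i g
      have := congrFun (congrFun h (delta i g)) i
      simpa [amnesiac, delta] using this
    · intro h
      funext x i
      simpa [amnesiac] using h i (x i)
  have h23 : (∀ (i : ℕ) (g : G), n (delta i g) i = 0) ↔
      (∀ (x : ℕ → G) (k : ℕ), (∀ j < k, x j = 0) → ∀ j ≤ k, n x j = 0) := by
    constructor
    · intro h x k hx j hj
      have heq : ∀ i < j + 1, x i = delta j (x j) i := by
        intro i hi
        rcases lt_or_eq_of_le (Nat.lt_succ_iff.mp hi) with hi' | hi'
        · rw [hx i (lt_of_lt_of_le hi' hj), delta, if_neg (Nat.ne_of_lt hi')]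
        · simp [delta, hi']
      have := hn (j + 1) x (delta j (x j)) heq j (Nat.lt_succ_self j)
      rw [this, h j (x j)]
    · intro h i g
      exact h (delta i g) i (fun j hj => by simp [delta, Nat.ne_of_lt hj]) i le_rfl
  exact ⟨h12, h12.trans h23⟩
end

section
/- Let (Q, t, f, s) be a state machine over G with induced map n. Then n is delaying if and only if for every reachable state r ∈ Q, the state output map g ↦ f(r, g) is a constant function (i.e., the state machine is a Moore machine on its reachable states). -/
/-- The state sequence of a state machine with transition map `t` and start state `s`
on input sequence `x`: `q 0 = s` and `q (i+1) = t (q i) (x i)`. -/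
def smState {G Q : Type*} (t : Q → G → Q) (s : Q) (x : ℕ → G) : ℕ → Q
  | 0 => s
  | i + 1 => t (smState t s x i) (x i)

/-- The map on sequences induced by the state machine `(Q, t, f, s)`. -/
def smMap {G Q : Type*} (t : Q → G → Q) (f : Q → G → G) (s : Q) :
    (ℕ → G) → (ℕ → G) :=
  fun x i => f (smState t s x i) (x i)

/-- A map on sequences over `G` is delaying if inputs agreeing on all positions `< k`
produce outputs agreeing on all positions `≤ k`. -/
def Delaying {G : Type*} [AddGroup G] (n : (ℕ → G) → (ℕ → G)) : Prop :=
  ∀ k : ℕ, ∀ x y : ℕ → G, (∀ i < k, x i = y i) → ∀ i ≤ k, n x i = n y i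

/-- A state `r` is reachable if it occurs in the state sequence induced by
some input sequence. -/
def Reachable {G Q : Type*} (t : Q → G → Q) (s : Q) (r : Q) : Prop :=
  ∃ (x : ℕ → G) (i : ℕ), smState t s x i = r

/-! The state at time `k` depends only on the inputs before time `k`. Hence a delaying
machine, fed two inputs that differ only at time `i`, is in the same state `r` at time `i`
and must emit the same output there, so `f r` is constant. Conversely, if the output
ignores the current input, the output at time `k` is determined by the state at time `k`,
hence by the inputs before time `k`. -/

section StateMachine

variable {G Q : Type*} (t : Q → G → Q) (f : Q → G → G) (s : Q)

theorem smState_congr {x y : ℕ → G} {k : ℕ} (h : ∀ i < k, x i = y i) :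
    smState t s x k = smState t s y k := by
  induction k with
  | zero => rfl
  | succ k ih =>
    simp only [smState]
    rw [ih fun i hi => h i (Nat.lt_succ_of_lt hi), h k (Nat.lt_succ_self k)]

theorem smState_update_self (x : ℕ → G) (i : ℕ) (g : G) :
    smState t s (Function.update x i g) i = smState t s x i :=
  smState_congr t s fun _ hj => Function.update_of_ne hj.ne _ _

theorem smMap_update_self (x : ℕ → G) (i : ℕ) (g : G) :
    smMap t f s (Function.update x i g) i = f (smState t s x i) g := by
  simp only [smMap, smState_update_self, Function.update_self]

theorem output_const_of_delaying [AddGroup G] (hd : Delaying (smMap t f s)) {r : Q}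
    (hr : Reachable t s r) (g₁ g₂ : G) : f r g₁ = f r g₂ := by
  obtain ⟨x, i, rfl⟩ := hr
  have agree_before_i : ∀ j < i, Function.update x i g₁ j = Function.update x i g₂ j :=
    fun j hj => by simp only [Function.update_of_ne hj.ne]
  simpa only [smMap_update_self] using hd i _ _ agree_before_i i le_rfl

theorem delaying_of_output_const [AddGroup G]
    (hm : ∀ r, Reachable t s r → ∀ g₁ g₂ : G, f r g₁ = f r g₂) :
    Delaying (smMap t f s) := by
  intro k x y hxy i hi
  have hstate : smState t s x i = smState t s y i :=
    smState_congr t s fun j hj => hxy j (hj.trans_le hi)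
  simp only [smMap, hstate]
  rcases hi.lt_or_eq with hlt | rfl
  · rw [hxy i hlt]
  · exact hm _ ⟨y, i, rfl⟩ _ _

end StateMachine

/-- The map induced by a state machine is delaying iff the state output map of every
reachable state is constant, i.e. iff the machine is a Moore machine on its
reachable states. -/
theorem smMap_delaying_iff_moore {G Q : Type*} [AddGroup G]
    (t : Q → G → Q) (f : Q → G → G) (s : Q) :
    Delaying (smMap t f s) ↔
      ∀ r : Q, Reachable t s r → ∀ g₁ g₂ : G, f r g₁ = f r g₂ :=
  ⟨fun hd _ hr => output_const_of_delaying t f s hd hr,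
    delaying_of_output_const t f s⟩
end

section
/- Every zero-preserving delaying map n on G^ℕ is quasiregular in PP(G): there exists a zero-preserving prefix-preserving map m : G^ℕ → G^ℕ such that m ∘ (id − n) = id, where (id − n)(x) = x − n(x) for all x ∈ G^ℕ. -/
section Solution

variable {G : Type*} [AddGroup G] (n : (ℕ → G) → (ℕ → G)) (y : ℕ → G)

/-- The first `k` entries of the solution of `x = y + n x`, padded with zeros. -/
def solutionApprox : ℕ → ℕ → G
  | 0 => 0
  | k + 1 => Function.update (solutionApprox k) k (y k + n (solutionApprox k) k)

def solution (k : ℕ) : G :=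
  solutionApprox n y (k + 1) k

theorem solutionApprox_apply_of_lt {k i : ℕ} (hi : i < k) :
    solutionApprox n y k i = solution n y i := by
  induction k with
  | zero => omega
  | succ k ih =>
    rcases (Nat.lt_succ_iff_lt_or_eq.mp hi) with hik | rfl
    · rw [solutionApprox, Function.update_of_ne hik.ne, ih hik]
    · rfl

theorem solution_apply (k : ℕ) : solution n y k = y k + n (solutionApprox n y k) k :=
  Function.update_self _ _ _

variable {n}

theorem Delaying.solution_eq_add (hn : Delaying n) : solution n y = y + n (solution n y) := by
  funext k
  rw [solution_apply, Pi.add_apply,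
    hn k _ _ (fun i hi => solutionApprox_apply_of_lt n y hi) k le_rfl]

theorem Delaying.eqOn_of_eq_add (hn : Delaying n) {x₁ x₂ y₁ y₂ : ℕ → G} {k : ℕ}
    (hy : ∀ i < k, y₁ i = y₂ i) (h₁ : x₁ = y₁ + n x₁) (h₂ : x₂ = y₂ + n x₂) :
    ∀ i < k, x₁ i = x₂ i := by
  induction k with
  | zero => omega
  | succ k ih =>
    have hx : ∀ i < k, x₁ i = x₂ i := ih fun i hi => hy i (by omega)
    intro i hi
    rcases (Nat.lt_succ_iff_lt_or_eq.mp hi) with hik | rfl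
    · exact hx i hik
    · rw [h₁, h₂, Pi.add_apply, Pi.add_apply, hy i (by omega), hn i x₁ x₂ hx i le_rfl]

theorem Delaying.eq_of_eq_add (hn : Delaying n) {x₁ x₂ : ℕ → G}
    (h₁ : x₁ = y + n x₁) (h₂ : x₂ = y + n x₂) : x₁ = x₂ :=
  funext fun i => hn.eqOn_of_eq_add (fun _ _ => rfl) h₁ h₂ i (Nat.lt_succ_self i)

theorem Delaying.zeroPreserving_solution (hn : Delaying n) (hn0 : ZeroPreserving n) :
    ZeroPreserving (solution n) :=
  hn.eq_of_eq_add 0 (hn.solution_eq_add 0) (by rw [hn0, add_zero])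

theorem Delaying.prefixPreserving_solution (hn : Delaying n) : PrefixPreserving (solution n) :=
  fun _ y₁ y₂ hy => hn.eqOn_of_eq_add hy (hn.solution_eq_add y₁) (hn.solution_eq_add y₂)

theorem Delaying.solution_sub (hn : Delaying n) (x : ℕ → G) : solution n (x - n x) = x :=
  hn.eq_of_eq_add _ (hn.solution_eq_add _) (sub_add_cancel x (n x)).symm

end Solution

/-- Every zero-preserving delaying map `n` is quasiregular in `PP(G)`: there is a
zero-preserving prefix-preserving map `m` with `m ∘ (id - n) = id`. -/
theorem delaying_quasiregular {G : Type*} [AddGroup G]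
    (n : (ℕ → G) → (ℕ → G)) (hn0 : ZeroPreserving n) (hnd : Delaying n) :
    ∃ m : (ℕ → G) → (ℕ → G), ZeroPreserving m ∧ PrefixPreserving m ∧
      m ∘ (fun x => x - n x) = id :=
  ⟨solution n, hnd.zeroPreserving_solution hn0, hnd.prefixPreserving_solution,
    funext hnd.solution_sub⟩
end

section
/- A finite abelian group G has property X if and only if the order of G is odd. -/
/-!
Telescoping `f (x + k) - f x = x` along the orbit of `x` under translation by `k`, which
has length `d = addOrderOf k`, gives `d • x + (d (d - 1) / 2) • k = 0` for every `x`. At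
`x = 0` this forces `d` to be odd, and then `d` kills `G`, so `|G|`, which divides a power
of `d`, is odd.

Conversely, if `|G|` is odd, pick `k` whose order `d` is the exponent of `G`. Then `G` is a
`ZMod d`-module in which `2` is invertible, and any `φ : G → ZMod d` with `φ (x + k) = φ x + 1`
(a coordinate along the cosets of `⟨k⟩`) gives the discrete antiderivative
`f x = φ x • x - (φ x (φ x + 1) / 2) • k`.
-/

open Finset

theorem Nat.odd_of_dvd_sum_range_id {d : ℕ} (hd : 0 < d) (h : d ∣ ∑ j ∈ range d, j) :
    Odd d := by
  obtain ⟨c, hc⟩ := h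
  have h2 := Finset.sum_range_id_mul_two d
  rw [hc, mul_assoc] at h2
  exact ⟨c, by have := Nat.eq_of_mul_eq_mul_left hd h2; omega⟩

section AddCommGroup

variable {G : Type*} [AddCommGroup G] {k : G} {f : G → G}

theorem sub_eq_sum_range_of_forall_sub_eq (hf : ∀ x, f (x + k) - f x = x) (x : G) (n : ℕ) :
    f (x + n • k) - f x = ∑ j ∈ range n, (x + j • k) := by
  have := Finset.sum_range_sub (fun j => f (x + j • k)) n
  simp only [zero_smul, add_zero] at this
  rw [← this]
  refine sum_congr rfl fun j _ => ?_
  rw [succ_nsmul, ← add_assoc, hf]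

theorem sum_range_addOrderOf_eq_zero_of_forall_sub_eq (hf : ∀ x, f (x + k) - f x = x) (x : G) :
    addOrderOf k • x + (∑ j ∈ range (addOrderOf k), j) • k = 0 := by
  have := sub_eq_sum_range_of_forall_sub_eq hf x (addOrderOf k)
  rwa [addOrderOf_nsmul_eq_zero, add_zero, sub_self, eq_comm, sum_add_distrib, sum_const,
    card_range, ← sum_smul] at this

theorem odd_addOrderOf_of_forall_sub_eq (hk : IsOfFinAddOrder k)
    (hf : ∀ x, f (x + k) - f x = x) : Odd (addOrderOf k) := by
  have := sum_range_addOrderOf_eq_zero_of_forall_sub_eq hf 0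
  rw [smul_zero, zero_add] at this
  exact Nat.odd_of_dvd_sum_range_id hk.addOrderOf_pos (addOrderOf_dvd_of_nsmul_eq_zero this)

theorem addOrderOf_nsmul_eq_zero_of_forall_sub_eq (hf : ∀ x, f (x + k) - f x = x) (x : G) :
    addOrderOf k • x = 0 := by
  have h0 := sum_range_addOrderOf_eq_zero_of_forall_sub_eq hf 0
  rw [smul_zero, zero_add] at h0
  simpa [h0] using sum_range_addOrderOf_eq_zero_of_forall_sub_eq hf x

theorem odd_natCard_of_odd_of_forall_nsmul_eq_zero [Finite G] {n : ℕ} (hn : Odd n)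
    (h : ∀ x : G, n • x = 0) : Odd (Nat.card G) :=
  hn.pow.of_dvd_nat (card_dvd_exponent_nsmul_rank' G h)

end AddCommGroup

theorem exists_zmod_addOrderOf_forall_add_eq_add_one {G : Type*} [AddGroup G] (k : G) :
    ∃ φ : G → ZMod (addOrderOf k), ∀ x, φ (x + k) = φ x + 1 := by
  let r : G → G := fun x => (x : G ⧸ AddSubgroup.zmultiples k).out
  have hr : ∀ x, -r x + x ∈ AddSubgroup.zmultiples k := fun x =>
    QuotientAddGroup.eq.1 (Quotient.out_eq _)
  choose m hm using fun x => AddSubgroup.mem_zmultiples_iff.1 (hr x)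
  refine ⟨fun x => m x, fun x => ?_⟩
  have hrk : r (x + k) = r x := by
    simp only [r]
    congr 1
    exact QuotientAddGroup.eq.2 (by simp)
  have : m (x + k) • k = (m x + 1) • k := by
    rw [hm, hrk, add_zsmul, hm, one_zsmul, add_assoc]
  rw [zsmul_eq_zsmul_iff_modEq, ← ZMod.intCast_eq_intCast_iff] at this
  simpa using this

theorem exists_forall_sub_eq_of_forall_add_eq_add_one {R G : Type*} [CommRing R]
    [Invertible (2 : R)] [AddCommGroup G] [Module R G] {k : G} {φ : G → R}
    (hφ : ∀ x, φ (x + k) = φ x + 1) :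
    ∃ f : G → G, ∀ x, f (x + k) - f x = x :=
  ⟨fun x => φ x • x - (⅟2 * φ x * (φ x + 1)) • k, fun x => by
    simp only [hφ]
    match_scalars
    · ring
    · linear_combination -(φ x + 1) * invOf_mul_self (2 : R)⟩

theorem exists_forall_sub_eq_of_odd_exponent {G : Type*} [AddCommGroup G] [Finite G]
    (hodd : Odd (AddMonoid.exponent G)) :
    ∃ (k : G) (f : G → G), ∀ x, f (x + k) - f x = x := by
  obtain ⟨k, hk⟩ :=
    AddMonoid.exists_addOrderOf_eq_exponent (AddMonoid.ExponentExists.of_finite (G := G))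
  rw [← hk] at hodd
  let : Module (ZMod (addOrderOf k)) G :=
    AddCommGroup.zmodModule fun x => hk ▸ AddMonoid.exponent_nsmul_eq_zero x
  let : Invertible (2 : ZMod (addOrderOf k)) :=
    Nat.cast_ofNat (R := ZMod (addOrderOf k)) (n := 2) ▸
      invertibleOfCoprime (Nat.coprime_two_left.2 hodd)
  obtain ⟨φ, hφ⟩ := exists_zmod_addOrderOf_forall_add_eq_add_one k
  exact ⟨k, exists_forall_sub_eq_of_forall_add_eq_add_one hφ⟩

/-- A finite abelian group has property X (there exist `k ∈ G` and `f : G → G` with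
`f (x + k) - f x = x` for all `x`) iff its order is odd. -/
theorem propertyX_iff_odd_card (G : Type*) [AddCommGroup G] [Fintype G] :
    (∃ (k : G) (f : G → G), ∀ x : G, f (x + k) - f x = x) ↔
      Odd (Fintype.card G) := by
  rw [← Nat.card_eq_fintype_card]
  constructor
  · rintro ⟨k, f, hf⟩
    exact odd_natCard_of_odd_of_forall_nsmul_eq_zero
      (odd_addOrderOf_of_forall_sub_eq (isOfFinAddOrder_of_finite k) hf)
      (addOrderOf_nsmul_eq_zero_of_forall_sub_eq hf)
  · intro hodd
    exact exists_forall_sub_eq_of_odd_exponent (hodd.of_dvd_nat AddGroup.exponent_dvd_nat_card)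
end

section
/- Let G be a group with property X, witnessed by k ∈ G and f : G → G satisfying f(x + k) − f(x) = x for all x ∈ G. Define c : G^ℕ → G^ℕ by (c x)_i = k if x_j ≠ 0 for some j < i, and (c x)_i = 0 otherwise. Then c is a zero-preserving delaying map, and for every zero-preserving prefix-preserving map d with α(d) = 0 and every x ∈ G^ℕ and i ∈ ℕ: f(((d + c)(x))_i) − f((d x)_i) = (d x)_i. Equivalently, with f̄ the componentwise application of f to sequences, f̄ ∘ (d + c) − f̄ ∘ d = d, so every element of ker α lies in the left ideal of PP(G) generated by the delaying maps. -/
open Classical in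
/-- The delaying map `c` attached to an element `k ∈ G`: `(c x)_i = k` if `x_j ≠ 0`
for some `j < i`, and `(c x)_i = 0` otherwise. -/
noncomputable def propXMachine {G : Type*} [AddGroup G] (k : G) :
    (ℕ → G) → (ℕ → G) :=
  fun x i => if ∃ j < i, x j ≠ 0 then k else 0

/-- Let `G` have property X, witnessed by `k ∈ G` and `f : G → G` with
`f (x + k) - f x = x`.  Then the map `c = propXMachine k` is a zero-preserving
delaying map, and for every zero-preserving prefix-preserving `d` in the kernel of
the amnesiac map `α` we have `f̄ ∘ (d + c) - f̄ ∘ d = d` componentwise (`f̄` applies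
`f` in every coordinate).  Hence every element of `ker α` lies in the left ideal of
`PP(G)` generated by the delaying maps. -/
theorem ker_amnesiac_in_left_ideal_of_delaying {G : Type*} [AddGroup G]
    (k : G) (f : G → G) (hf : ∀ x : G, f (x + k) - f x = x) :
    ZeroPreserving (propXMachine k) ∧ Delaying (propXMachine k) ∧
    ∀ d : (ℕ → G) → (ℕ → G),
      ZeroPreserving d → PrefixPreserving d → amnesiac d = 0 →
      ∀ (x : ℕ → G) (i : ℕ),
        f ((d x + propXMachine k x) i) - f (d x i) = d x i := by
  refine ⟨?_, ?_, ?_⟩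
  · funext i
    simp [propXMachine]
  · intro m x y hxy i hi
    simp only [propXMachine]
    congr 1
    apply propext
    constructor
    · rintro ⟨j, hj, hne⟩
      exact ⟨j, hj, by rw [← hxy j (lt_of_lt_of_le hj hi)]; exact hne⟩
    · rintro ⟨j, hj, hne⟩
      exact ⟨j, hj, by rw [hxy j (lt_of_lt_of_le hj hi)]; exact hne⟩
  · intro d hzd hpd had x i
    by_cases h : ∃ j < i, x j ≠ 0
    · simp only [Pi.add_apply, propXMachine, if_pos h]
      exact hf _
    · have hx : ∀ j ≤ i, x j = delta i (x i) j := by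
        intro j hj
        rcases lt_or_eq_of_le hj with hj | rfl
        · push_neg at h
          simp [delta, Nat.ne_of_lt hj, h j hj]
        · simp [delta]
      have hd0 : d x i = 0 := by
        have := hpd (i + 1) x (delta i (x i))
          (fun j hj => hx j (Nat.lt_succ_iff.mp hj)) i (Nat.lt_succ_self i)
        have h2 : amnesiac d x i = 0 := by rw [had]; rfl
        simpa [amnesiac] using this.trans h2
      simp [Pi.add_apply, propXMachine, if_neg h, hd0]
end

section
/- Let (Q, t, f, s) be a state machine over G with induced map n, and define the modified transition map t'(q, g) = t(q, 0). Then the induced map of the state machine (Q, t', f, s) equals α(n). -/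

theorem smState_delta {G Q : Type*} [AddGroup G]
    (t : Q → G → Q) (s : Q) (x : ℕ → G) (i : ℕ) :
    ∀ j, j ≤ i → smState (fun q (_ : G) => t q 0) s x j = smState t s (delta i (x i)) j := by
  intro j
  induction j with
  | zero => intro _; rfl
  | succ k ih =>
    intro hk
    have hk' : k ≤ i := Nat.le_of_succ_le hk
    have hne : k ≠ i := fun h => by omega
    simp [smState, ih hk', delta, hne]

/-- Applying the amnesiac map to the map induced by a state machine `(Q, t, f, s)`
gives the map induced by the state machine `(Q, t', f, s)` where
`t' q g = t q 0`. -/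
theorem amnesiac_smMap {G Q : Type*} [AddGroup G]
    (t : Q → G → Q) (f : Q → G → G) (s : Q) :
    smMap (fun q (_ : G) => t q 0) f s = amnesiac (smMap t f s) := by
  funext x i
  have h := smState_delta t s x i i le_rfl
  simp [smMap, amnesiac, h, delta]
end
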